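/- arXiv:1504.07291 — 5 statements merged into one kernel-verified Lean document; each statement's English description precedes it below -/
import Mathlib

section
/- Let f : ℝ → ℝ be C¹, odd, with lim_{s→0} f(s)/s = 0, and s ↦ f(s)/s strictly increasing on (0,∞). Define F(s) = ∫₀ˢ f(σ)dσ and H(s) = s·f(s) − 2F(s). Then H(s) > 0 for all s ≠ 0. -/
theorem stmt_1 (f : ℝ → ℝ)
    (hf : ContDiff ℝ 1 f)
    (hodd : ∀ s, f (-s) = -f s)
    (hlim : Filter.Tendsto (fun s => f s / s) (nhdsWithin 0 {0}ᶜ) (nhds 0))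
    (hmono : StrictMonoOn (fun s => f s / s) (Set.Ioi (0:ℝ)))
    (F H : ℝ → ℝ)
    (hF : ∀ s, F s = ∫ t in (0:ℝ)..s, f t)
    (hH : ∀ s, H s = s * f s - 2 * F s) :
    ∀ s : ℝ, s ≠ 0 → H s > 0 := by
  have hcont : Continuous f := hf.continuous
  have hf0 : f 0 = 0 := by
    have := hodd 0; simp at this; linarith
  have key : ∀ s : ℝ, 0 < s → H s > 0 := by
    intro s hs
    have hlt : (∫ t in (0:ℝ)..s, f t) < ∫ t in (0:ℝ)..s, (f s / s) * t := by
      apply intervalIntegral.integral_lt_integral_of_continuousOn_of_le_of_exists_lt hs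
        (hcont.continuousOn) (by fun_prop)
      · intro x hx
        rcases eq_or_lt_of_le hx.2 with rfl | hxs
        · exact le_of_eq (by field_simp [ne_of_gt hx.1])
        · have h1 : f x / x < f s / s := hmono (Set.mem_Ioi.2 hx.1) (Set.mem_Ioi.2 hs) hxs
          have hx0 : (0:ℝ) < x := hx.1
          calc f x = (f x / x) * x := by field_simp
            _ ≤ (f s / s) * x := by nlinarith
      · refine ⟨s/2, ⟨by linarith, by linarith⟩, ?_⟩
        have h2 : (0:ℝ) < s/2 := by linarith
        have h1 : f (s/2) / (s/2) < f s / s :=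
          hmono (Set.mem_Ioi.2 h2) (Set.mem_Ioi.2 hs) (by linarith)
        calc f (s/2) = (f (s/2) / (s/2)) * (s/2) := by field_simp
          _ < (f s / s) * (s/2) := by nlinarith
    have hint : (∫ t in (0:ℝ)..s, (f s / s) * t) = s * f s / 2 := by
      rw [intervalIntegral.integral_const_mul, integral_id]
      field_simp; ring
    have hFs : F s < s * f s / 2 := by rw [hF]; linarith
    rw [hH]; linarith
  have Feven : ∀ s : ℝ, F (-s) = F s := by
    intro s
    rw [hF, hF]
    have h1 : (∫ t in (0:ℝ)..s, f t) = ∫ t in (0:ℝ)..s, -f (-t) := by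
      congr 1; ext t; rw [hodd t]; ring
    rw [h1, intervalIntegral.integral_neg, intervalIntegral.integral_comp_neg f]
    rw [intervalIntegral.integral_symm]
    simp
  intro s hs
  rcases lt_or_gt_of_ne hs with h | h
  · have hH' : H s = H (-s) := by
      rw [hH, hH, Feven s, show s * f s = (-s) * f (-s) by rw [hodd s]; ring]
    rw [hH']
    exact key (-s) (by linarith)
  · exact key s h
end

section
/- Let f : ℝ → ℝ be C¹, odd, with s ↦ f(s)/s strictly increasing on (0,∞) and lim_{s→0} f(s)/s = 0. Then H(s) := s f(s) − 2∫₀ˢ f is an even function of s which is strictly increasing on [0,∞); in particular H(s) > H(λs) for every s ≠ 0 and λ ∈ (0,1). -/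
/-!
Since `s ↦ f s / s` is strictly increasing, `f t < t * (f b / b)` for `0 < t < b`. Integrating over
`[a, b]` gives `∫ a..b f < (b² - a²)/2 · f b / b`, and combined with `a f a ≤ a² f b / b` this is
exactly `H a < H b`. Evenness of `H` comes from oddness of `f`, and reduces the last claim to
`|λ s| < |s|`.
-/

open Set

namespace Function

lemma Even.apply_abs {α β : Type*} [AddGroup α] [LinearOrder α] {g : α → β} (hg : g.Even) (x : α) : g |x| = g x := by
  rcases abs_choice x with h | h <;> rw [h]
  exact hg x

lemma Odd.even_intervalIntegral {E : Type*} [NormedAddCommGroup E] [NormedSpace ℝ E]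
    {f : ℝ → E} (hf : f.Odd) :
    (fun s => ∫ t in (0:ℝ)..s, f t).Even := by
  intro s
  have h := intervalIntegral.integral_comp_neg (a := (0:ℝ)) (b := s) f
  simp only [hf.eq, intervalIntegral.integral_neg, neg_zero] at h
  show ∫ t in (0:ℝ)..-s, f t = ∫ t in (0:ℝ)..s, f t
  rw [intervalIntegral.integral_symm, ← h, neg_neg]

end Function

section StrictMonoDivSelf

variable {f : ℝ → ℝ} (hmono : StrictMonoOn (fun s => f s / s) (Ioi 0))
include hmono

lemma lt_mul_div_of_strictMonoOn_div_self {x b : ℝ} (hx : 0 < x) (hxb : x < b) :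
    f x < x * (f b / b) := by
  have h : f x / x < f b / b := hmono hx (hx.trans hxb) hxb
  rwa [div_lt_iff₀' hx] at h

lemma integral_lt_of_strictMonoOn_div_self (hcont : ContinuousOn f (Ici 0)) {a b : ℝ}
    (ha : 0 ≤ a) (hab : a < b) :
    ∫ t in a..b, f t < (b ^ 2 - a ^ 2) / 2 * (f b / b) := by
  have hb : 0 < b := ha.trans_lt hab
  have hle : ∀ x ∈ Ioc a b, f x ≤ x * (f b / b) := by
    rintro x ⟨hax, hxb⟩
    rcases hxb.eq_or_lt with rfl | hxb
    · rw [mul_div_cancel₀ _ hb.ne']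
    · exact (lt_mul_div_of_strictMonoOn_div_self hmono (ha.trans_lt hax) hxb).le
  have hmid : f ((a + b) / 2) < (a + b) / 2 * (f b / b) :=
    lt_mul_div_of_strictMonoOn_div_self hmono (by linarith) (by linarith)
  calc ∫ t in a..b, f t < ∫ t in a..b, t * (f b / b) :=
        intervalIntegral.integral_lt_integral_of_continuousOn_of_le_of_exists_lt hab
          (hcont.mono (Icc_subset_Ici_self.trans (Ici_subset_Ici.2 ha))) (by fun_prop) hle
          ⟨(a + b) / 2, ⟨by linarith, by linarith⟩, hmid⟩
    _ = (b ^ 2 - a ^ 2) / 2 * (f b / b) := by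
        rw [intervalIntegral.integral_mul_const, integral_id]

lemma strictMonoOn_mul_sub_two_integral_of_strictMonoOn_div_self
    (hcont : ContinuousOn f (Ici 0)) :
    StrictMonoOn (fun s => s * f s - 2 * ∫ t in (0:ℝ)..s, f t) (Ici 0) := by
  intro a (ha : 0 ≤ a) b _ hab
  have hb : 0 < b := ha.trans_lt hab
  have hint := integral_lt_of_strictMonoOn_div_self hmono hcont ha hab
  have hsplit : (∫ t in (0:ℝ)..b, f t) - ∫ t in (0:ℝ)..a, f t = ∫ t in a..b, f t :=
    intervalIntegral.integral_interval_sub_left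
      ((hcont.mono (uIcc_of_le hb.le ▸ Icc_subset_Ici_self)).intervalIntegrable)
      ((hcont.mono (uIcc_of_le ha ▸ Icc_subset_Ici_self)).intervalIntegrable)
  have haf : a * f a ≤ a ^ 2 * (f b / b) := by
    rcases ha.eq_or_lt with rfl | ha
    · simp
    · nlinarith [lt_mul_div_of_strictMonoOn_div_self hmono ha hab]
  have hbf : b * f b = b ^ 2 * (f b / b) := by field_simp
  dsimp only
  linarith

end StrictMonoDivSelf

theorem stmt_2_general (f : ℝ → ℝ)
    (hf : ContDiff ℝ 1 f)
    (hodd : ∀ s, f (-s) = -f s)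
    (hmono : StrictMonoOn (fun s => f s / s) (Set.Ioi (0:ℝ)))
    (F H : ℝ → ℝ)
    (hF : ∀ s, F s = ∫ t in (0:ℝ)..s, f t)
    (hH : ∀ s, H s = s * f s - 2 * F s) :
    (∀ s, H (-s) = H s) ∧ StrictMonoOn H (Set.Ici (0:ℝ)) ∧
      (∀ s : ℝ, s ≠ 0 → ∀ l : ℝ, l ∈ Set.Ioo (0:ℝ) 1 → H s > H (l * s)) := by
  have hHdef : H = fun s => s * f s - 2 * ∫ t in (0:ℝ)..s, f t := by
    ext s; rw [hH, hF]
  have heven : H.Even := by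
    intro s
    rw [hHdef]
    simp only [hodd, (Function.Odd.even_intervalIntegral hodd).eq]
    ring
  have hstrict : StrictMonoOn H (Ici 0) := hHdef ▸
    strictMonoOn_mul_sub_two_integral_of_strictMonoOn_div_self hmono hf.continuous.continuousOn
  refine ⟨heven, hstrict, fun s hs l ⟨hl0, hl1⟩ => ?_⟩
  rw [← heven.apply_abs s, ← heven.apply_abs (l * s), abs_mul, abs_of_pos hl0]
  have hs' : 0 < |s| := abs_pos.2 hs
  exact hstrict (mem_Ici.2 (by positivity)) (abs_nonneg s) (mul_lt_of_lt_one_left hs' hl1)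

theorem stmt_2 (f : ℝ → ℝ)
    (hf : ContDiff ℝ 1 f)
    (hodd : ∀ s, f (-s) = -f s)
    (hlim : Filter.Tendsto (fun s => f s / s) (nhdsWithin 0 {0}ᶜ) (nhds 0))
    (hmono : StrictMonoOn (fun s => f s / s) (Set.Ioi (0:ℝ)))
    (F H : ℝ → ℝ)
    (hF : ∀ s, F s = ∫ t in (0:ℝ)..s, f t)
    (hH : ∀ s, H s = s * f s - 2 * F s) :
    (∀ s, H (-s) = H s) ∧ StrictMonoOn H (Set.Ici (0:ℝ)) ∧
      (∀ s : ℝ, s ≠ 0 → ∀ l : ℝ, l ∈ Set.Ioo (0:ℝ) 1 → H s > H (l * s)) :=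
  stmt_2_general f hf hodd hmono F H hF hH
end

section
/- Assume Ozawa's inequality: there exist 0 < ω ≤ π and for each α ∈ (0,ω) a constant H_α > 0 with ∫_ℝ(e^{αu²}−1)dx ≤ H_α‖u‖²_{L²} whenever ‖(−Δ)^{1/4}u‖²_{L²} ≤ 1. Then for every u ∈ H^{1/2}(ℝ) and every α > 0 (not only small α), the integral ∫_ℝ (e^{α u²} − 1) dx is finite. -/
open MeasureTheory

noncomputable def gagliardoSq (u : ℝ → ℝ) : ℝ :=
  (1 / (2 * Real.pi)) * ∫ p : ℝ × ℝ, (u p.1 - u p.2) ^ 2 / |p.1 - p.2| ^ 2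

noncomputable def l2Sq (u : ℝ → ℝ) : ℝ := ∫ x : ℝ, (u x) ^ 2

def memH12 (u : ℝ → ℝ) : Prop :=
  MemLp u 2 volume ∧
    Integrable (fun p : ℝ × ℝ => (u p.1 - u p.2) ^ 2 / |p.1 - p.2| ^ 2)

/-!
Split `u = clamp N ∘ u + r_N`. The remainder map `t ↦ t - clamp N t` is `1`-Lipschitz and vanishes
on `[-N, N]`, so dominated convergence gives `gagliardoSq r_N → 0`; fix `N` with
`2α · gagliardoSq r_N < ω`. Rescaled truncations of `r_N` then have energy at most `1` for an
exponent `β < ω`, and Ozawa's inequality makes `exp (2α r_N²) - 1` integrable. Finally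
`(a + b)² ≤ 2a² + 2b²` with `|clamp N u| ≤ N` gives
`exp (α u²) - 1 ≤ e^{2αN²} (exp (2α r_N²) - 1) + 2α e^{2αN²} (clamp N u)²`.
-/

open Filter Topology NNReal

noncomputable def gagliardoIntegrand (u : ℝ → ℝ) (p : ℝ × ℝ) : ℝ :=
  (u p.1 - u p.2) ^ 2 / |p.1 - p.2| ^ 2

lemma gagliardoSq_eq (u : ℝ → ℝ) :
    gagliardoSq u = (1 / (2 * Real.pi)) * ∫ p, gagliardoIntegrand u p := rfl

lemma gagliardoIntegrand_nonneg (u : ℝ → ℝ) (p : ℝ × ℝ) : 0 ≤ gagliardoIntegrand u p := by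
  unfold gagliardoIntegrand
  positivity

lemma aestronglyMeasurable_gagliardoIntegrand {u : ℝ → ℝ}
    (hu : AEStronglyMeasurable u volume) :
    AEStronglyMeasurable (gagliardoIntegrand u) volume := by
  rw [Measure.volume_eq_prod]
  exact ((hu.comp_fst.sub hu.comp_snd).pow 2).div₀
    ((continuous_fst.sub continuous_snd).abs.pow 2).aestronglyMeasurable

section Lipschitz

variable {u φ : ℝ → ℝ} {K : ℝ≥0}

lemma LipschitzWith.gagliardoIntegrand_comp_le (hφ : LipschitzWith K φ) (p : ℝ × ℝ) :
    gagliardoIntegrand (φ ∘ u) p ≤ K ^ 2 * gagliardoIntegrand u p := by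
  have h := hφ.dist_le_mul (u p.1) (u p.2)
  rw [Real.dist_eq, Real.dist_eq] at h
  simp only [gagliardoIntegrand, Function.comp_apply]
  rw [mul_div_assoc', ← sq_abs (φ (u p.1) - _), ← sq_abs (u p.1 - _), ← mul_pow]
  gcongr

lemma LipschitzWith.integrable_gagliardoIntegrand_comp (hφ : LipschitzWith K φ)
    (hu : memH12 u) : Integrable (gagliardoIntegrand (φ ∘ u)) :=
  (hu.2.const_mul (K ^ 2 : ℝ)).mono'
    (aestronglyMeasurable_gagliardoIntegrand (hφ.continuous.comp_aestronglyMeasurable hu.1.1))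
    (ae_of_all _ fun p => by
      rw [Real.norm_of_nonneg (gagliardoIntegrand_nonneg _ p)]
      exact hφ.gagliardoIntegrand_comp_le p)

lemma LipschitzWith.memH12_comp (hφ : LipschitzWith K φ) (hφ0 : φ 0 = 0) (hu : memH12 u) :
    memH12 (φ ∘ u) :=
  ⟨hφ.comp_memLp hφ0 hu.1, hφ.integrable_gagliardoIntegrand_comp hu⟩

lemma LipschitzWith.gagliardoSq_comp_le (hφ : LipschitzWith K φ) (hu : memH12 u) :
    gagliardoSq (φ ∘ u) ≤ K ^ 2 * gagliardoSq u := by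
  calc gagliardoSq (φ ∘ u)
      ≤ 1 / (2 * Real.pi) * ∫ p, (K ^ 2 : ℝ) * gagliardoIntegrand u p := by
        rw [gagliardoSq_eq]
        gcongr
        · exact hφ.integrable_gagliardoIntegrand_comp hu
        · exact hu.2.const_mul _
        · exact fun p => hφ.gagliardoIntegrand_comp_le p
    _ = K ^ 2 * gagliardoSq u := by rw [integral_const_mul, gagliardoSq_eq]; ring

lemma LipschitzWith.l2Sq_comp_le (hφ : LipschitzWith K φ) (hφ0 : φ 0 = 0)
    (hu : MemLp u 2 volume) : l2Sq (φ ∘ u) ≤ K ^ 2 * l2Sq u := by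
  unfold l2Sq
  rw [← integral_const_mul]
  refine integral_mono (hφ.comp_memLp hφ0 hu).integrable_sq (hu.integrable_sq.const_mul _)
    fun x => ?_
  have h := hφ.dist_le_mul (u x) 0
  rw [Real.dist_eq, Real.dist_eq, hφ0, sub_zero, sub_zero] at h
  simp only [Function.comp_apply]
  rw [← sq_abs, ← sq_abs (u x), ← mul_pow]
  gcongr

end Lipschitz

noncomputable def clamp (M t : ℝ) : ℝ := max (-M) (min M t)

section Clamp

variable {M t : ℝ}

lemma lipschitzWith_clamp (M : ℝ) : LipschitzWith 1 (clamp M) :=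
  (LipschitzWith.id.const_min M).const_max (-M)

lemma monotone_clamp (M : ℝ) : Monotone (clamp M) :=
  fun _ _ h => max_le_max le_rfl (min_le_min le_rfl h)

lemma clamp_of_abs_le (h : |t| ≤ M) : clamp M t = t := by
  rw [abs_le] at h
  rw [clamp, min_eq_right h.2, max_eq_right h.1]

lemma clamp_zero (hM : 0 ≤ M) : clamp M 0 = 0 := clamp_of_abs_le (by simpa using hM)

lemma abs_clamp_le (hM : 0 ≤ M) : |clamp M t| ≤ M := by
  rw [abs_le]
  exact ⟨le_max_left _ _, max_le (by linarith) (min_le_left _ _)⟩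

lemma eventually_clamp_eq (t : ℝ) : ∀ᶠ N : ℕ in atTop, clamp N t = t := by
  obtain ⟨N, hN⟩ := exists_nat_ge |t|
  filter_upwards [eventually_ge_atTop N] with n hn
  exact clamp_of_abs_le (hN.trans (Nat.cast_le.2 hn))

end Clamp

lemma LipschitzWith.sub_of_monotone {f : ℝ → ℝ} (hf : LipschitzWith 1 f) (hmono : Monotone f) :
    LipschitzWith 1 (fun t => t - f t) := by
  refine LipschitzWith.of_dist_le_mul fun a b => ?_
  wlog hab : b ≤ a generalizing a b
  · rw [dist_comm, dist_comm a]; exact this b a (le_of_not_ge hab)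
  have h1 := hmono hab
  have h2 := hf.dist_le_mul a b
  rw [Real.dist_eq, Real.dist_eq, NNReal.coe_one, one_mul] at *
  rw [abs_of_nonneg (sub_nonneg.2 h1), abs_of_nonneg (sub_nonneg.2 hab)] at h2
  rw [abs_of_nonneg (by linarith), abs_of_nonneg (by linarith)]
  linarith

lemma lipschitzWith_sub_clamp (M : ℝ) : LipschitzWith 1 (fun t => t - clamp M t) :=
  (lipschitzWith_clamp M).sub_of_monotone (monotone_clamp M)

section Exp

open Real

lemma exp_sub_one_le_mul_exp {y L : ℝ} (hy : 0 ≤ y) (hyL : y ≤ L) : exp y - 1 ≤ y * exp L := by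
  have h1 : exp y * exp (-y) = 1 := by rw [← exp_add, add_neg_cancel, exp_zero]
  have h2 : exp y - 1 ≤ y * exp y := by nlinarith [add_one_le_exp (-y), exp_pos y]
  exact h2.trans (mul_le_mul_of_nonneg_left (exp_le_exp.2 hyL) hy)

lemma exp_mul_add_sq_sub_one_le {α a b L : ℝ} (hα : 0 ≤ α) (hb : b ^ 2 ≤ L) :
    exp (α * (a + b) ^ 2) - 1
      ≤ exp (2 * α * L) * (exp (2 * α * a ^ 2) - 1) + 2 * α * exp (2 * α * L) * b ^ 2 := by
  have hsplit : exp (α * (a + b) ^ 2) ≤ exp (2 * α * a ^ 2) * exp (2 * α * b ^ 2) := by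
    rw [← exp_add, exp_le_exp]
    nlinarith [mul_nonneg hα (sq_nonneg (a - b))]
  have hA : 0 ≤ exp (2 * α * a ^ 2) - 1 := sub_nonneg.2 (one_le_exp (by positivity))
  have hB : exp (2 * α * b ^ 2) ≤ exp (2 * α * L) := exp_le_exp.2 (by nlinarith)
  have hB' : exp (2 * α * b ^ 2) - 1 ≤ 2 * α * b ^ 2 * exp (2 * α * L) :=
    exp_sub_one_le_mul_exp (by positivity) (by nlinarith)
  -- `e^(A+B) - 1 = (e^A - 1) e^B + (e^B - 1)`
  nlinarith [mul_le_mul_of_nonneg_left hB hA]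

variable {X : Type*} [MeasurableSpace X] {μ : Measure X}

lemma integrable_exp_mul_sq_sub_one_of_abs_le {w : X → ℝ} {α M : ℝ} (hα : 0 ≤ α)
    (hw : MemLp w 2 μ) (hM : ∀ x, |w x| ≤ M) :
    Integrable (fun x => exp (α * w x ^ 2) - 1) μ := by
  refine (hw.integrable_sq.const_mul (α * exp (α * M ^ 2))).mono'
    ((by fun_prop : Continuous fun t => exp (α * t ^ 2) - 1).comp_aestronglyMeasurable hw.1)
    (ae_of_all _ fun x => ?_)
  have hwM : w x ^ 2 ≤ M ^ 2 := by
    rw [← sq_abs (w x)]; exact pow_le_pow_left₀ (abs_nonneg _) (hM x) 2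
  rw [Real.norm_of_nonneg (sub_nonneg.2 (one_le_exp (by positivity))), mul_right_comm]
  exact exp_sub_one_le_mul_exp (by positivity) (by gcongr)

end Exp

lemma integrable_of_tendsto_of_integral_le {G : ℕ → ℝ → ℝ} {f : ℝ → ℝ} {μ : Measure ℝ}
    {C : ℝ} (hGf : ∀ᵐ x ∂μ, Tendsto (fun n => G n x) atTop (𝓝 (f x)))
    (hG : ∀ n, Integrable (G n) μ) (hG0 : ∀ n x, 0 ≤ G n x) (hC : ∀ n, ∫ x, G n x ∂μ ≤ C) :
    Integrable f μ := by
  refine integrable_of_tendsto hGf (fun n => (hG n).1)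
    (ne_top_of_le_ne_top (ENNReal.ofReal_ne_top (r := C))
      (liminf_le_of_frequently_le' (Frequently.of_forall fun n => ?_)))
  rw [← ofReal_integral_norm_eq_lintegral_enorm (hG n)]
  refine ENNReal.ofReal_le_ofReal ((integral_congr_ae (ae_of_all _ fun x => ?_)).trans_le (hC n))
  exact Real.norm_of_nonneg (hG0 n x)

lemma tendsto_gagliardoSq_comp_zero {u : ℝ → ℝ} (hu : memH12 u) {φ : ℕ → ℝ → ℝ}
    (hφ : ∀ n, LipschitzWith 1 (φ n)) (hlim : ∀ t, Tendsto (fun n => φ n t) atTop (𝓝 0)) :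
    Tendsto (fun n => gagliardoSq (φ n ∘ u)) atTop (𝓝 0) := by
  have hint : Tendsto (fun n => ∫ p, gagliardoIntegrand (φ n ∘ u) p) atTop
      (𝓝 (∫ _ : ℝ × ℝ, (0 : ℝ))) := by
    refine tendsto_integral_of_dominated_convergence (gagliardoIntegrand u)
      (fun n => aestronglyMeasurable_gagliardoIntegrand
        ((hφ n).continuous.comp_aestronglyMeasurable hu.1.1)) hu.2
      (fun n => ae_of_all _ fun p => ?_) (ae_of_all _ fun p => ?_)
    · rw [Real.norm_of_nonneg (gagliardoIntegrand_nonneg _ p)]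
      simpa using (hφ n).gagliardoIntegrand_comp_le p
    · simpa only [gagliardoIntegrand, Function.comp_apply, sub_zero, zero_pow two_ne_zero,
        zero_div] using (((hlim (u p.1)).sub (hlim (u p.2))).pow 2).div_const (|p.1 - p.2| ^ 2)
  simpa only [gagliardoSq_eq, integral_zero, mul_zero] using hint.const_mul (1 / (2 * Real.pi))

lemma tendsto_gagliardoSq_sub_clamp {u : ℝ → ℝ} (hu : memH12 u) :
    Tendsto (fun N : ℕ => gagliardoSq ((fun t => t - clamp N t) ∘ u)) atTop (𝓝 0) :=
  tendsto_gagliardoSq_comp_zero hu (fun N => lipschitzWith_sub_clamp N) fun t =>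
    tendsto_const_nhds.congr' (by filter_upwards [eventually_clamp_eq t] with N hN; simp [hN])

def OzawaInequality (ω : ℝ) : Prop :=
  ∀ α ∈ Set.Ioo (0:ℝ) ω, ∃ Hα : ℝ, 0 < Hα ∧
    ∀ u : ℝ → ℝ, memH12 u → gagliardoSq u ≤ 1 →
      (∫ x : ℝ, (Real.exp (α * (u x) ^ 2) - 1)) ≤ Hα * l2Sq u

open Real in
lemma OzawaInequality.integrable_exp_mul_sq_sub_one {ω : ℝ} (hOz : OzawaInequality ω)
    (hω : 0 < ω) {v : ℝ → ℝ} (hv : memH12 v) {α : ℝ} (hα : 0 ≤ α) (hsmall : α * gagliardoSq v < ω) :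
    Integrable (fun x => exp (α * v x ^ 2) - 1) := by
  -- `β ≥ α · gagliardoSq v` is what puts the rescaled truncations below energy `1`
  set β := max (α * gagliardoSq v) (ω / 2)
  have hβ : β ∈ Set.Ioo 0 ω := ⟨lt_max_of_lt_right (by positivity), max_lt hsmall (by linarith)⟩
  obtain ⟨H, hH, hOzβ⟩ := hOz β hβ
  set c := √(α / β)
  have hc : c ^ 2 = α / β := sq_sqrt (div_nonneg hα hβ.1.le)
  have hφ (N : ℕ) : LipschitzWith (‖c‖₊ * 1) (fun t => c * clamp N t) :=
    (lipschitzWith_smul c).comp (lipschitzWith_clamp N)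
  have hK : ((‖c‖₊ * 1 : ℝ≥0) : ℝ) ^ 2 = α / β := by simp [hc]
  have hbound (N : ℕ) : ∫ x, (exp (α * clamp N (v x) ^ 2) - 1) ≤ H * (α / β * l2Sq v) := by
    have hOzN := hOzβ _ ((hφ N).memH12_comp (by simp [clamp_zero]) hv) <| calc
      _ ≤ _ := (hφ N).gagliardoSq_comp_le hv
      _ = α * gagliardoSq v / β := by rw [hK]; ring
      _ ≤ 1 := (div_le_one hβ.1).2 (le_max_left _ _)
    have hscale (x : ℝ) : β * (c * clamp N (v x)) ^ 2 = α * clamp N (v x) ^ 2 := by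
      rw [mul_pow, hc]; field_simp [hβ.1.ne']
    simp only [Function.comp_apply, hscale] at hOzN
    refine hOzN.trans (mul_le_mul_of_nonneg_left ?_ hH.le)
    exact hK ▸ (hφ N).l2Sq_comp_le (by simp [clamp_zero]) hv.1
  -- the bound is only meaningful for integrable functions (a Bochner integral is `0` otherwise),
  -- hence the truncations and Fatou's lemma
  refine integrable_of_tendsto_of_integral_le (ae_of_all _ fun x => ?_)
    (fun N => integrable_exp_mul_sq_sub_one_of_abs_le hα
      ((lipschitzWith_clamp N).comp_memLp (clamp_zero N.cast_nonneg) hv.1)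
      (fun x => abs_clamp_le N.cast_nonneg))
    (fun N x => sub_nonneg.2 (one_le_exp (by positivity))) hbound
  exact tendsto_const_nhds.congr'
    (by filter_upwards [eventually_clamp_eq (v x)] with N hN; simp [hN])

theorem stmt_6
    (hOzawa : ∃ ω : ℝ, 0 < ω ∧ ω ≤ Real.pi ∧
      ∀ α ∈ Set.Ioo (0:ℝ) ω, ∃ Hα : ℝ, 0 < Hα ∧
        ∀ u : ℝ → ℝ, memH12 u → gagliardoSq u ≤ 1 →
          (∫ x : ℝ, (Real.exp (α * (u x) ^ 2) - 1)) ≤ Hα * l2Sq u) :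
    ∀ u : ℝ → ℝ, memH12 u → ∀ α : ℝ, 0 < α →
      Integrable (fun x : ℝ => Real.exp (α * (u x) ^ 2) - 1) := by
  obtain ⟨ω, hω, -, hOz⟩ := hOzawa
  intro u hu α hα
  obtain ⟨N, hN⟩ : ∃ N : ℕ, 2 * α * gagliardoSq ((fun t => t - clamp N t) ∘ u) < ω := by
    have h := (tendsto_gagliardoSq_sub_clamp hu).const_mul (2 * α)
    rw [mul_zero] at h
    exact (h.eventually_lt_const hω).exists
  have hr := OzawaInequality.integrable_exp_mul_sq_sub_one hOz hω
    ((lipschitzWith_sub_clamp N).memH12_comp (by simp [clamp_zero]) hu) (by positivity) hN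
  have hc := ((lipschitzWith_clamp N).comp_memLp (clamp_zero N.cast_nonneg) hu.1).integrable_sq
  set E := Real.exp (2 * α * (N : ℝ) ^ 2)
  have hmeas := (by fun_prop : Continuous fun t => Real.exp (α * t ^ 2) - 1)
    |>.comp_aestronglyMeasurable hu.1.1
  refine ((hr.const_mul E).add (hc.const_mul (2 * α * E))).mono' hmeas (ae_of_all _ fun x => ?_)
  rw [Real.norm_of_nonneg (sub_nonneg.2 (Real.one_le_exp (by positivity)))]
  have hclamp : clamp N (u x) ^ 2 ≤ (N : ℝ) ^ 2 := by
    rw [← sq_abs]; exact pow_le_pow_left₀ (abs_nonneg _) (abs_clamp_le N.cast_nonneg) 2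
  simpa using exp_mul_add_sq_sub_one_le (a := u x - clamp N (u x)) hα.le hclamp
end

section
/- Let j : ℝ → ℝ be convex with j(0) = 0, let k > 1 and ε ∈ (0, 1/k), and set φ_ε(s) = j(ks) − k j(s) and ψ_ε(s) = |j(C_ε s)| + |j(−C_ε s)| with C_ε = 1/(ε(k−1)). Then φ_ε(s) ≥ 0 for all s, and |j(a+b) − j(a)| ≤ ε φ_ε(a) + ψ_ε(b) for all a, b ∈ ℝ. -/
/-!
Put `l = ε (k - 1)` and `C = 1 / l`, so that `ε + (1 - ε k) + l = 1` and `l C = 1`. Both halves of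
the estimate are three-point Jensen inequalities:
`a + b = ε (k a) + (1 - ε k) a + l (C b)` bounds `j (a + b) - j a` by `ε φ(a) + l j(C b)`, and
`(1 + ε k) a = (a + b) + ε (k a) + l (-C b)` bounds `j a - j (a + b)` by `ε φ(a) + l j(-C b)`.
Since `0 < l ≤ 1`, the terms `l j(±C b)` are at most `|j(±C b)|`. Positivity of `φ` is
`j s ≤ k⁻¹ j (k s) + (1 - k⁻¹) j 0`.
-/

open Set

theorem ConvexOn.map_add_add_le {𝕜 E β : Type*} [Field 𝕜] [LinearOrder 𝕜] [IsStrictOrderedRing 𝕜]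
    [AddCommGroup E] [AddCommGroup β] [PartialOrder β] [IsOrderedAddMonoid β] [Module 𝕜 E]
    [Module 𝕜 β] [IsStrictOrderedModule 𝕜 β] {s : Set E} {f : E → β} (hf : ConvexOn 𝕜 s f)
    {x y z : E} (hx : x ∈ s) (hy : y ∈ s) (hz : z ∈ s) {p q r : 𝕜} (hp : 0 ≤ p) (hq : 0 ≤ q)
    (hr : 0 ≤ r) (hpqr : p + q + r = 1) :
    f (p • x + q • y + r • z) ≤ p • f x + q • f y + r • f z := by
  simpa [Fin.sum_univ_three] using
    hf.map_sum_le (t := Finset.univ) (w := ![p, q, r]) (p := ![x, y, z])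
      (by simp [Fin.forall_fin_succ, hp, hq, hr]) (by simpa [Fin.sum_univ_three] using hpqr)
      (by simp [Fin.forall_fin_succ, hx, hy, hz])

theorem ConvexOn.map_smul_le_of_map_zero {𝕜 E β : Type*} [Ring 𝕜] [PartialOrder 𝕜]
    [IsOrderedRing 𝕜] [AddCommMonoid E] [AddCommMonoid β] [PartialOrder β] [Module 𝕜 E]
    [Module 𝕜 β] {s : Set E} {f : E → β} (hf : ConvexOn 𝕜 s f) (h0 : (0 : E) ∈ s)
    (hf0 : f 0 = 0) {x : E} (hx : x ∈ s) {t : 𝕜} (ht₀ : 0 ≤ t) (ht₁ : t ≤ 1) :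
    f (t • x) ≤ t • f x := by
  simpa [hf0] using hf.2 hx h0 ht₀ (sub_nonneg.2 ht₁) (add_sub_cancel t 1)

namespace ConvexOn

variable {j : ℝ → ℝ}

theorem mul_map_le_map_mul (hj : ConvexOn ℝ univ j) (hj0 : j 0 = 0) {k : ℝ} (hk : 1 ≤ k) (s : ℝ) :
    k * j s ≤ j (k * s) := by
  have hk₀ : 0 < k := one_pos.trans_le hk
  have h := hj.map_smul_le_of_map_zero (mem_univ 0) hj0 (mem_univ (k * s))
    (inv_nonneg.2 hk₀.le) (inv_le_one_of_one_le₀ hk)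
  rw [smul_eq_mul, smul_eq_mul, inv_mul_cancel_left₀ hk₀.ne'] at h
  rwa [← le_inv_mul_iff₀ hk₀]

theorem map_add_le_brezisLieb (hj : ConvexOn ℝ univ j) {ε k C : ℝ} (hε : 0 ≤ ε) (hk : 1 ≤ k)
    (hεk : ε * k ≤ 1) (hC : C * (ε * (k - 1)) = 1) (a b : ℝ) :
    j (a + b) ≤ ε * j (k * a) + (1 - ε * k) * j a + ε * (k - 1) * j (C * b) := by
  have h := hj.map_add_add_le (mem_univ (k * a)) (mem_univ a) (mem_univ (C * b)) hε
    (sub_nonneg.2 hεk) (mul_nonneg hε (sub_nonneg.2 hk)) (by ring)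
  have hsplit : ε * (k * a) + (1 - ε * k) * a + ε * (k - 1) * (C * b) = a + b := by
    linear_combination b * hC
  simpa only [smul_eq_mul, hsplit] using h

theorem le_map_add_brezisLieb (hj : ConvexOn ℝ univ j) {ε k C : ℝ} (hε : 0 ≤ ε) (hk : 1 ≤ k)
    (hC : C * (ε * (k - 1)) = 1) (a b : ℝ) :
    (1 + ε * k) * j a ≤ j (a + b) + ε * j (k * a) + ε * (k - 1) * j (-(C * b)) := by
  have hS : 0 < 1 + ε * k := by positivity
  have h := hj.map_add_add_le (mem_univ (a + b)) (mem_univ (k * a)) (mem_univ (-(C * b)))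
    (inv_nonneg.2 hS.le) (div_nonneg hε hS.le) (div_nonneg (mul_nonneg hε (sub_nonneg.2 hk)) hS.le)
    (by field_simp; ring)
  have hsplit : (1 + ε * k)⁻¹ * (a + b) + ε / (1 + ε * k) * (k * a)
      + ε * (k - 1) / (1 + ε * k) * -(C * b) = a := by
    field_simp
    linear_combination (-b) * hC
  simp only [smul_eq_mul, hsplit] at h
  calc (1 + ε * k) * j a
      ≤ (1 + ε * k) * ((1 + ε * k)⁻¹ * j (a + b) + ε / (1 + ε * k) * j (k * a)
          + ε * (k - 1) / (1 + ε * k) * j (-(C * b))) := mul_le_mul_of_nonneg_left h hS.le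
    _ = j (a + b) + ε * j (k * a) + ε * (k - 1) * j (-(C * b)) := by field_simp

end ConvexOn

theorem stmt_12 (j : ℝ → ℝ) (hj : ConvexOn ℝ Set.univ j) (hj0 : j 0 = 0)
    (k ε : ℝ) (hk : 1 < k) (hε : ε ∈ Set.Ioo (0:ℝ) (1 / k))
    (Cε : ℝ) (hCε : Cε = 1 / (ε * (k - 1)))
    (φ ψ : ℝ → ℝ)
    (hφ : ∀ s, φ s = j (k * s) - k * j s)
    (hψ : ∀ s, ψ s = |j (Cε * s)| + |j (-(Cε * s))|) :
    (∀ s : ℝ, 0 ≤ φ s) ∧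
      (∀ a b : ℝ, |j (a + b) - j a| ≤ ε * φ a + ψ b) := by
  obtain ⟨hε₀, hεk⟩ := hε
  have hk₀ : 0 < k := one_pos.trans hk
  have hεk' : ε * k ≤ 1 := ((lt_div_iff₀ hk₀).1 hεk).le
  set l := ε * (k - 1)
  have hl₀ : 0 < l := mul_pos hε₀ (sub_pos.2 hk)
  have hl₁ : l ≤ 1 := by linarith
  have hC : Cε * l = 1 := by rw [hCε, one_div_mul_cancel hl₀.ne']
  have hl_abs : ∀ x, l * x ≤ |x| := fun x =>
    (mul_le_mul_of_nonneg_left (le_abs_self x) hl₀.le).trans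
      (mul_le_of_le_one_left (abs_nonneg x) hl₁)
  refine ⟨fun s => by linarith [hφ s, hj.mul_map_le_map_mul hj0 hk.le s], fun a b => ?_⟩
  have hup := hj.map_add_le_brezisLieb hε₀.le hk.le hεk' hC a b
  have hlow := hj.le_map_add_brezisLieb hε₀.le hk.le hC a b
  rw [hφ, hψ, abs_sub_le_iff]
  constructor <;> linarith [hl_abs (j (Cε * b)), hl_abs (j (-(Cε * b))),
    abs_nonneg (j (Cε * b)), abs_nonneg (j (-(Cε * b)))]
end

section
/- Let f : ℝ → ℝ be continuous with f(s)s > 0 for s ≠ 0, s ↦ f(s)/s strictly increasing on (0,∞), f odd, and H(s) = sf(s) − 2F(s) ≥ 0 increasing on [0,∞). Let u ∈ H^{1/2}(ℝ)\{0} and λ ∈ (0,1) with λ‖u‖² = ∫_ℝ f(λu)u dx (i.e., λu on Nehari manifold). Then J(λu) = ½∫_ℝ H(λu) dx < ½∫_ℝ H(u) dx, where J(v) = ½‖v‖² − ∫F(v). -/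
open MeasureTheory

theorem stmt_15 (f F H : ℝ → ℝ)
    (hf : Continuous f)
    (hsign : ∀ s : ℝ, s ≠ 0 → 0 < f s * s)
    (hmono : StrictMonoOn (fun s => f s / s) (Set.Ioi (0:ℝ)))
    (hodd : ∀ s, f (-s) = -f s)
    (hF : ∀ s, F s = ∫ t in (0:ℝ)..s, f t)
    (hH : ∀ s, H s = s * f s - 2 * F s)
    (hHnonneg : ∀ s, 0 ≤ H s)
    (hHmono : StrictMonoOn H (Set.Ici (0:ℝ)))
    (u : ℝ → ℝ) (hu : Measurable u)
    (hune0 : 0 < volume {x : ℝ | u x ≠ 0})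
    (A : ℝ) (hA : 0 < A)  -- A = ‖u‖²_{H^{1/2}}
    (l : ℝ) (hl : l ∈ Set.Ioo (0:ℝ) 1)
    (hNehari : l * A = ∫ x : ℝ, f (l * u x) * u x)
    (hIntflu : Integrable (fun x => f (l * u x) * u x))
    (hIntFlu : Integrable (fun x => F (l * u x)))
    (hIntHu : Integrable (fun x => H (u x)))
    (hIntHlu : Integrable (fun x => H (l * u x))) :
    (1 / 2) * (l ^ 2 * A) - (∫ x : ℝ, F (l * u x)) = (1 / 2) * ∫ x : ℝ, H (l * u x) ∧
      (1 / 2) * (∫ x : ℝ, H (l * u x)) < (1 / 2) * ∫ x : ℝ, H (u x) := by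
  obtain ⟨hl0, hl1⟩ := hl
  -- F is even
  have hFeven : ∀ s, F (-s) = F s := by
    intro s
    have h := intervalIntegral.integral_comp_neg (a := 0) (b := s) (f := f)
    simp only [hodd, neg_zero] at h
    rw [intervalIntegral.integral_neg, intervalIntegral.integral_symm] at h
    have e1 : ∫ t in (0:ℝ)..(-s), f t = -∫ t in (-s)..(0:ℝ), f t :=
      intervalIntegral.integral_symm _ _
    have e2 : ∫ t in (0:ℝ)..s, f t = -∫ t in s..(0:ℝ), f t :=
      intervalIntegral.integral_symm _ _
    rw [hF, hF, e1, e2]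
    linarith [h]
  -- H is even
  have hHeven : ∀ s, H (-s) = H s := by
    intro s
    rw [hH, hH, hodd, hFeven]
    ring
  -- pointwise comparison
  have hkey : ∀ s : ℝ, H (l * s) ≤ H s ∧ (s ≠ 0 → H (l * s) < H s) := by
    intro s
    rcases lt_trichotomy s 0 with hs | hs | hs
    · have h1 : H (l * s) = H (l * (-s)) := by
        rw [← hHeven (l * s)]; ring_nf
      have h2 : H s = H (-s) := (hHeven s).symm
      have hlt : H (l * (-s)) < H (-s) := by
        apply hHmono (by nlinarith : (0:ℝ) ≤ l * (-s)) (by linarith : (0:ℝ) ≤ -s)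
        nlinarith
      exact ⟨by rw [h1, h2]; exact hlt.le, fun _ => by rw [h1, h2]; exact hlt⟩
    · subst hs; simp
    · have hlt : H (l * s) < H s := by
        apply hHmono (by positivity : (0:ℝ) ≤ l * s) hs.le
        nlinarith
      exact ⟨hlt.le, fun _ => hlt⟩
  -- first part
  have hInt1 : Integrable (fun x => l * u x * f (l * u x)) := by
    have := hIntflu.const_mul l
    refine this.congr (Filter.Eventually.of_forall fun x => ?_)
    ring
  have hI : ∫ x : ℝ, H (l * u x)
      = (∫ x : ℝ, l * u x * f (l * u x)) - 2 * ∫ x : ℝ, F (l * u x) := by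
    rw [← integral_const_mul, ← integral_sub hInt1 (hIntFlu.const_mul 2)]
    exact integral_congr_ae (Filter.Eventually.of_forall fun x => by simpa using hH (l * u x))
  have hII : (∫ x : ℝ, l * u x * f (l * u x)) = l ^ 2 * A := by
    have : (fun x => l * u x * f (l * u x)) = fun x => l * (f (l * u x) * u x) := by
      funext x; ring
    rw [this, integral_const_mul, ← hNehari]; ring
  have part1 : (1 / 2) * (l ^ 2 * A) - (∫ x : ℝ, F (l * u x))
      = (1 / 2) * ∫ x : ℝ, H (l * u x) := by
    rw [hI, hII]; ring
  refine ⟨part1, ?_⟩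
  -- second part
  have hg : Integrable (fun x => H (u x) - H (l * u x)) := hIntHu.sub hIntHlu
  have hgpos : 0 < ∫ x : ℝ, (H (u x) - H (l * u x)) := by
    rw [integral_pos_iff_support_of_nonneg_ae
      (Filter.Eventually.of_forall fun x => by
        have := (hkey (u x)).1; simp only [Pi.zero_apply]; linarith) hg]
    refine lt_of_lt_of_le hune0 (measure_mono ?_)
    intro x hx
    have := (hkey (u x)).2 hx
    simp only [Function.mem_support]
    intro h
    linarith
  have := integral_sub hIntHu hIntHlu
  rw [this] at hgpos
  linarith
end
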